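/- Let G be a finite simple graph whose edge set is partitioned into regions E_1, …, E_k, and let u, w ∈ V(R_j) for some region index j. Then u and w are connected in G if and only if at least one of the following holds: (a) there is a path from u to w in the region graph R_j that contains no boundary vertex of the partition; or (b) there exist boundary vertices b_u and b_w such that u and b_u are connected in R_j, w and b_w are connected in R_j, and b_u and b_w are connected in G. -/

import Mathlib

/-- The region graph `R_i`: the graph on the full vertex set `V` whose edges are the
edges of the part `E i`. -/
def regG {V : Type*} {k : ℕ} (E : Fin k → Set (Sym2 V)) (i : Fin k) : SimpleGraph V :=
  SimpleGraph.fromEdgeSet (E i)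

/-- A boundary vertex of the region partition `E`: a vertex incident to edges of at
least two different parts. -/
def IsBoundary {V : Type*} {k : ℕ} (E : Fin k → Set (Sym2 V)) (v : V) : Prop :=
  ∃ i j, i ≠ j ∧ (∃ e ∈ E i, v ∈ e) ∧ (∃ e' ∈ E j, v ∈ e')

/-!
A walk in `G` starting inside region `j` can only leave the region graph `R_j` through a
boundary vertex, since every edge of `G` at a non-boundary vertex of `V(R_j)` lies in `E_j`.
So a walk from `u` either stays in `R_j` avoiding the boundary, or reaches a boundary vertex
`b_u` inside `R_j` first. Applying this to a walk from `u` to `w` and, in the second case,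
to the reversed walk from `w` to `b_u` gives the forward direction; the converse holds
because `R_j ≤ G`.
-/

open SimpleGraph

section Region

variable {V : Type*} {G : SimpleGraph V} {k : ℕ} {E : Fin k → Set (Sym2 V)}

lemma regG_le (hunion : ⋃ i, E i = G.edgeSet) (j : Fin k) : regG E j ≤ G := fun _ _ h =>
  show s(_, _) ∈ G.edgeSet from hunion ▸ Set.mem_iUnion_of_mem j ((fromEdgeSet_adj _).1 h).1

lemma regG_adj_of_not_isBoundary (hunion : ⋃ i, E i = G.edgeSet) {j : Fin k} {v x : V}
    (hv : v ∈ (regG E j).support) (hb : ¬ IsBoundary E v) (h : G.Adj v x) :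
    (regG E j).Adj v x := by
  obtain ⟨i, hi⟩ := Set.mem_iUnion.1 (hunion ▸ h : s(v, x) ∈ ⋃ i, E i)
  obtain rfl : i = j := by
    by_contra hij
    obtain ⟨y, hy⟩ := hv
    exact hb ⟨i, j, hij, ⟨_, hi, Sym2.mem_mk_left v x⟩,
      ⟨_, ((fromEdgeSet_adj _).1 hy).1, Sym2.mem_mk_left v y⟩⟩
  exact (fromEdgeSet_adj _).2 ⟨hi, h.ne⟩

lemma Walk.exists_regG_walk_or_reachable_isBoundary (hunion : ⋃ i, E i = G.edgeSet)
    (j : Fin k) {u w : V} (p : G.Walk u w) (hu : u ∈ (regG E j).support) :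
    (∃ q : (regG E j).Walk u w, ∀ v ∈ q.support, ¬ IsBoundary E v) ∨
      ∃ b, IsBoundary E b ∧ (regG E j).Reachable u b ∧ G.Reachable b w := by
  by_cases hb : IsBoundary E u
  · exact .inr ⟨u, hb, .refl u, ⟨p⟩⟩
  induction p with
  | nil => exact .inl ⟨.nil, by simpa using hb⟩
  | @cons u x w h p ih =>
    have hadj := regG_adj_of_not_isBoundary hunion hu hb h
    by_cases hbx : IsBoundary E x
    · exact .inr ⟨x, hbx, hadj.reachable, ⟨p⟩⟩
    rcases ih ⟨u, hadj.symm⟩ hbx with ⟨q, hq⟩ | ⟨b, hb', hr, hbw⟩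
    · exact .inl ⟨.cons hadj q, by simpa [hb] using hq⟩
    · exact .inr ⟨b, hb', hadj.reachable.trans hr, hbw⟩

end Region

theorem stmt9_general {V : Type*} (G : SimpleGraph V) {k : ℕ}
    (E : Fin k → Set (Sym2 V))
    (hunion : ⋃ i, E i = G.edgeSet)
    (j : Fin k) (u w : V)
    (hu : u ∈ (regG E j).support) (hw : w ∈ (regG E j).support) :
    G.Reachable u w ↔
      ((∃ p : (regG E j).Walk u w, p.IsPath ∧ ∀ v ∈ p.support, ¬ IsBoundary E v) ∨
       (∃ bu bw : V, IsBoundary E bu ∧ IsBoundary E bw ∧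
         (regG E j).Reachable u bu ∧ (regG E j).Reachable w bw ∧
         G.Reachable bu bw)) := by
  classical
  constructor
  · rintro ⟨p⟩
    rcases Walk.exists_regG_walk_or_reachable_isBoundary hunion j p hu with
      ⟨q, hq⟩ | ⟨bu, hbu, hru, ⟨pbu⟩⟩
    · exact .inl ⟨q.toPath, q.toPath.2, fun v hv => hq v (q.support_toPath_subset_support hv)⟩
    rcases Walk.exists_regG_walk_or_reachable_isBoundary hunion j pbu.reverse hw with
      ⟨q, hq⟩ | ⟨bw, hbw, hrw, hbwu⟩
    · exact absurd hbu (hq bu q.end_mem_support)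
    · exact .inr ⟨bu, bw, hbu, hbw, hru, hrw, hbwu.symm⟩
  · rintro (⟨p, -⟩ | ⟨bu, bw, -, -, hru, hrw, hbuw⟩)
    · exact ⟨p.mapLe (regG_le hunion j)⟩
    · exact ((hru.mono (regG_le hunion j)).trans hbuw).trans (hrw.mono (regG_le hunion j)).symm

/-- Let the edge set of a finite simple graph `G` be partitioned into
regions `E 0, …, E (k-1)`, and let `u, w ∈ V(R j)` for a region index `j`.  Then
`u` and `w` are connected in `G` iff (a) there is a path from `u` to `w` in the
region graph `R j` containing no boundary vertex, or (b) there are boundary vertices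
`b_u`, `b_w` such that `u` is connected to `b_u` in `R j`, `w` is connected to `b_w`
in `R j`, and `b_u` is connected to `b_w` in `G`. -/
theorem stmt9 {V : Type*} [Fintype V] (G : SimpleGraph V) {k : ℕ}
    (E : Fin k → Set (Sym2 V))
    (hunion : ⋃ i, E i = G.edgeSet)
    (hdisj : ∀ i j, i ≠ j → Disjoint (E i) (E j))
    (j : Fin k) (u w : V)
    (hu : u ∈ (regG E j).support) (hw : w ∈ (regG E j).support) :
    G.Reachable u w ↔
      ((∃ p : (regG E j).Walk u w, p.IsPath ∧ ∀ v ∈ p.support, ¬ IsBoundary E v) ∨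
       (∃ bu bw : V, IsBoundary E bu ∧ IsBoundary E bw ∧
         (regG E j).Reachable u bu ∧ (regG E j).Reachable w bw ∧
         G.Reachable bu bw)) :=
  stmt9_general G E hunion j u w hu hw
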